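/- If H_1, ..., H_k are subgraphs of a DAG D whose arc sets are pairwise disjoint, then the sum over i of the arc-deletion distance to a funnel of H_i is at most the arc-deletion distance to a funnel of D. -/

import Mathlib

variable {V : Type*} [Fintype V] [DecidableEq V]

/-- Arc adjacency of a digraph given by its finite arc set. -/
def ArcAdj (A : Finset (V × V)) : V → V → Prop := fun u v => (u, v) ∈ A

/-- A digraph is a DAG if it contains no directed cycle. -/
def IsDAG (A : Finset (V × V)) : Prop := ∀ v : V, ¬ Relation.TransGen (ArcAdj A) v v

/-- Indegree of a vertex. -/
def inDeg (A : Finset (V × V)) (v : V) : ℕ := (A.filter fun e => e.2 = v).card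

/-- Outdegree of a vertex. -/
def outDeg (A : Finset (V × V)) (v : V) : ℕ := (A.filter fun e => e.1 = v).card

/-- A source is a vertex of indegree 0. -/
def IsSource (A : Finset (V × V)) (v : V) : Prop := inDeg A v = 0

/-- A sink is a vertex of outdegree 0. -/
def IsSink (A : Finset (V × V)) (v : V) : Prop := outDeg A v = 0

/-- The arcs (consecutive pairs of vertices) of a path given as a list of vertices. -/
def arcsOf (p : List V) : List (V × V) := p.zip p.tail

/-- A source-sink path: a directed path (with at least one arc) starting at a
source and ending at a sink. -/
def IsSourceSinkPath (A : Finset (V × V)) (p : List V) : Prop :=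
  2 ≤ p.length ∧ List.Chain' (ArcAdj A) p ∧ p.Nodup ∧
  (∃ s, p.head? = some s ∧ IsSource A s) ∧
  (∃ t, p.getLast? = some t ∧ IsSink A t)

/-- An arc is private if exactly one source-sink path contains it. -/
def IsPrivate (A : Finset (V × V)) (e : V × V) : Prop :=
  ∃! p : List V, IsSourceSinkPath A p ∧ e ∈ arcsOf p

/-- A funnel: every source-sink path contains at least one private arc. -/
def IsFunnel (A : Finset (V × V)) : Prop :=
  ∀ p : List V, IsSourceSinkPath A p → ∃ e ∈ arcsOf p, IsPrivate A e

/-- The arc-deletion distance to a funnel: the minimum number of arcs whose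
deletion turns the digraph into a funnel. -/
noncomputable def funnelDist (A : Finset (V × V)) : ℕ :=
  sInf {k | ∃ B ⊆ A, B.card = k ∧ IsFunnel (A \ B)}


/-! In a DAG, a funnel is the same as a digraph in which no vertex of indegree at least two
reaches a vertex of outdegree at least two. If such a merge `u` reaches such a split `w`,
two ways into `u` and two ways out of `w` give four source-sink paths, and every arc of one of
them lies on a second one. Conversely, every source-sink path has an arc `(a, b)` such that all
vertices up to `a` have indegree at most one and all vertices from `b` on have outdegree at most
one; such an arc determines the whole path, so it is private.

The characterization shows that a subgraph of a funnel DAG is a funnel. Hence, if deleting `B`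
turns `D` into a funnel, deleting `B ∩ H i` turns `H i` into a funnel, and the pairwise disjoint
sets `B ∩ H i` have at most `|B|` arcs in total. -/

open Relation

namespace List

variable {α : Type*} {R : α → α → Prop}

theorem IsChain.nodup_of_acyclic (hR : ∀ a, ¬TransGen R a a) {l : List α} (hl : l.IsChain R) :
    l.Nodup := by
  have hpw := isChain_iff_pairwise.mp (hl.imp fun _ _ => TransGen.single)
  exact hpw.imp fun {a b} (hab : TransGen R a b) (heq : a = b) => hR b (heq ▸ hab)

theorem exists_isChain_cons_of_acyclic [Finite α] (hR : ∀ a, ¬TransGen R a a) (a : α) :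
    ∃ l, (a :: l).IsChain R ∧ ∀ b, ¬R ((a :: l).getLast (cons_ne_nil a l)) b := by
  have hwf : WellFounded (flip (TransGen R)) := by
    have : IsTrans α (flip (TransGen R)) := ⟨fun _ _ _ h₁ h₂ => h₂.trans h₁⟩
    have : Std.Irrefl (flip (TransGen R)) := ⟨hR⟩
    exact Finite.wellFounded_of_trans_of_irrefl _
  induction a using hwf.induction with
  | _ a ih =>
    by_cases h : ∃ b, R a b
    · obtain ⟨b, hab⟩ := h
      obtain ⟨l, hl, hlast⟩ := ih b (TransGen.single hab)
      exact ⟨b :: l, hl.cons_cons hab, by simpa using hlast⟩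
    · simp only [not_exists] at h
      exact ⟨[], .singleton a, h⟩

theorem IsChain.eq_of_functional {l l' : List α} (hl : l.IsChain R) (hl' : l'.IsChain R)
    (hhead : l.head? = l'.head?) (hfun : ∀ x ∈ l, ∀ y z, R x y → R x z → y = z)
    (hend : ∃ t, l.getLast? = some t ∧ ∀ y, ¬R t y)
    (hend' : ∃ t, l'.getLast? = some t ∧ ∀ y, ¬R t y) : l = l' := by
  induction l generalizing l' with
  | nil => simp at hend
  | cons a l ih =>
    obtain _ | ⟨a', l'⟩ := l'
    · simp at hhead
    obtain rfl : a = a' := by simpa using hhead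
    obtain _ | ⟨b, l⟩ := l <;> obtain _ | ⟨b', l'⟩ := l'
    · rfl
    · obtain ⟨t, ht, hsink⟩ := hend
      exact absurd (isChain_cons_cons.mp hl').1 (by simp at ht; exact ht ▸ hsink b')
    · obtain ⟨t, ht, hsink⟩ := hend'
      exact absurd (isChain_cons_cons.mp hl).1 (by simp at ht; exact ht ▸ hsink b)
    obtain rfl := hfun a mem_cons_self b b' (isChain_cons_cons.mp hl).1 (isChain_cons_cons.mp hl').1
    exact congrArg (a :: ·) (ih hl.tail hl'.tail rfl (fun x hx => hfun x (mem_cons_of_mem a hx))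
      (by simpa using hend) (by simpa using hend'))

theorem IsChain.exists_split {p q : α → Prop} (hpq : ∀ u v, ¬p u → ReflTransGen R u v → q v) :
    ∀ {x y : α} {l : List α}, (x :: y :: l).IsChain R → p x →
      q ((x :: y :: l).getLast (cons_ne_nil _ _)) →
      ∃ l₁ a b l₂, x :: y :: l = l₁ ++ a :: b :: l₂ ∧ (∀ z ∈ l₁ ++ [a], p z) ∧ ∀ z ∈ b :: l₂, q z
  | x, y, [], _, hx, hy => ⟨[], x, y, [], rfl, by simpa using hx, by simpa using hy⟩
  | x, y, z :: l, hl, hx, hlast => by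
    by_cases hy : p y
    · obtain ⟨l₁, a, b, l₂, hsplit, hp, hq⟩ := hl.tail.exists_split hpq hy (by simpa using hlast)
      exact ⟨x :: l₁, a, b, l₂, by rw [hsplit]; rfl, by simpa [hx] using hp, hq⟩
    · refine ⟨[], x, y, z :: l, rfl, by simpa using hx, fun v hv => hpq y v hy ?_⟩
      exact hl.tail.induction (ReflTransGen R y ·) _ (fun _ _ h ih => ih.tail h)
        (fun _ => .refl) v hv

end List

section Digraph

variable {V : Type*} {A C : Finset (V × V)}

theorem IsDAG.subset (hd : IsDAG A) (h : C ⊆ A) : IsDAG C :=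
  fun v hv => hd v (TransGen.mono (fun _ _ huv => h huv) _ _ hv)

theorem arcsOf_append_cons (l : List V) (a : V) (m : List V) :
    arcsOf (l ++ a :: m) = arcsOf (l ++ [a]) ++ arcsOf (a :: m) := by
  match l with
  | [] => rfl
  | [_] => rfl
  | b :: c :: l => exact congrArg ((b, c) :: ·) (arcsOf_append_cons (c :: l) a m)

theorem mem_arcsOf_iff {p : List V} {a b : V} :
    (a, b) ∈ arcsOf p ↔ ∃ l₁ l₂, p = l₁ ++ a :: b :: l₂ := by
  constructor
  · intro h
    match p, h with
    | x :: y :: l, h =>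
      rcases List.mem_cons.mp h with h | h
      · obtain ⟨rfl, rfl⟩ := Prod.mk.inj h
        exact ⟨[], l, rfl⟩
      · obtain ⟨l₁, l₂, hsplit⟩ := mem_arcsOf_iff.mp h
        exact ⟨x :: l₁, l₂, by rw [hsplit]; rfl⟩
  · rintro ⟨l₁, l₂, rfl⟩
    rw [arcsOf_append_cons]
    exact List.mem_append_right _ List.mem_cons_self

variable [DecidableEq V]
theorem isSource_iff {v : V} : IsSource A v ↔ ∀ u, ¬ArcAdj A u v := by
  simp only [IsSource, inDeg, ArcAdj, Finset.card_eq_zero, Finset.filter_eq_empty_iff, Prod.forall]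
  exact ⟨fun h u hu => h u v hu rfl, fun h u _ hu => by rintro rfl; exact h u hu⟩

theorem isSink_iff {v : V} : IsSink A v ↔ ∀ w, ¬ArcAdj A v w := by
  simp only [IsSink, outDeg, ArcAdj, Finset.card_eq_zero, Finset.filter_eq_empty_iff, Prod.forall]
  exact ⟨fun h w hw => h v w hw rfl, fun h _ w hw => by rintro rfl; exact h w hw⟩

theorem eq_of_inDeg_le_one {u u' v : V} (h : inDeg A v ≤ 1) (hu : ArcAdj A u v)
    (hu' : ArcAdj A u' v) : u = u' :=
  congrArg Prod.fst <| Finset.card_le_one.mp h _ (Finset.mem_filter.mpr ⟨hu, rfl⟩) _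
    (Finset.mem_filter.mpr ⟨hu', rfl⟩)

theorem eq_of_outDeg_le_one {u w w' : V} (h : outDeg A u ≤ 1) (hw : ArcAdj A u w)
    (hw' : ArcAdj A u w') : w = w' :=
  congrArg Prod.snd <| Finset.card_le_one.mp h _ (Finset.mem_filter.mpr ⟨hw, rfl⟩) _
    (Finset.mem_filter.mpr ⟨hw', rfl⟩)

theorem exists_ne_of_two_le_inDeg {v : V} (h : 2 ≤ inDeg A v) :
    ∃ u u', u ≠ u' ∧ ArcAdj A u v ∧ ArcAdj A u' v := by
  obtain ⟨⟨u, x⟩, ⟨u', x'⟩, hu, hu', hne⟩ := Finset.one_lt_card_iff.mp h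
  simp only [Finset.mem_filter] at hu hu'
  obtain ⟨hu, rfl⟩ := hu
  obtain ⟨hu', rfl⟩ := hu'
  exact ⟨u, u', fun h => hne (h ▸ rfl), hu, hu'⟩

theorem exists_ne_of_two_le_outDeg {u : V} (h : 2 ≤ outDeg A u) :
    ∃ w w', w ≠ w' ∧ ArcAdj A u w ∧ ArcAdj A u w' := by
  obtain ⟨⟨x, w⟩, ⟨x', w'⟩, hw, hw', hne⟩ := Finset.one_lt_card_iff.mp h
  simp only [Finset.mem_filter] at hw hw'
  obtain ⟨hw, rfl⟩ := hw
  obtain ⟨hw', rfl⟩ := hw'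
  exact ⟨w, w', fun h => hne (h ▸ rfl), hw, hw'⟩

def IsPathFromSource (A : Finset (V × V)) (P : List V) (v : V) : Prop :=
  P.IsChain (ArcAdj A) ∧ P.getLast? = some v ∧ ∃ s, P.head? = some s ∧ IsSource A s

def IsPathToSink (A : Finset (V × V)) (v : V) (Q : List V) : Prop :=
  Q.IsChain (ArcAdj A) ∧ Q.head? = some v ∧ ∃ t, Q.getLast? = some t ∧ IsSink A t

theorem IsDAG.exists_isPathToSink [Finite V] (hd : IsDAG A) (v : V) :
    ∃ Q, IsPathToSink A v Q := by
  obtain ⟨l, hl, hlast⟩ := List.exists_isChain_cons_of_acyclic hd v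
  exact ⟨v :: l, hl, rfl, _, List.getLast?_eq_some_getLast _, isSink_iff.mpr hlast⟩

theorem IsDAG.exists_isPathFromSource [Finite V] (hd : IsDAG A) (v : V) :
    ∃ P, IsPathFromSource A P v := by
  obtain ⟨l, hl, hlast⟩ := List.exists_isChain_cons_of_acyclic (R := flip (ArcAdj A))
    (fun a ha => hd a (transGen_swap.mp ha)) v
  refine ⟨(v :: l).reverse, List.isChain_reverse.mpr hl, by simp, _, ?_, isSource_iff.mpr hlast⟩
  rw [List.head?_reverse, List.getLast?_eq_some_getLast]

theorem IsPathToSink.append_left {l Q : List V} {u w x : V} (hl : l.IsChain (ArcAdj A))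
    (hlu : l.head? = some u) (hlw : l.getLast? = some w) (hwx : ArcAdj A w x)
    (hQ : IsPathToSink A x Q) : IsPathToSink A u (l ++ Q) := by
  obtain ⟨hQc, hQx, t, hQt, ht⟩ := hQ
  refine ⟨hl.append hQc (by simp [hlw, hQx, hwx]), ?_, t, ?_, ht⟩
  · simp [List.head?_append, hlu]
  · simp [List.getLast?_append, hQt]

theorem IsDAG.isSourceSinkPath_append (hd : IsDAG A) {P Q : List V} {y x : V}
    (hP : IsPathFromSource A P y) (hyx : ArcAdj A y x) (hQ : IsPathToSink A x Q) :
    IsSourceSinkPath A (P ++ Q) := by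
  obtain ⟨hPc, hPy, s, hPs, hs⟩ := hP
  obtain ⟨hQc, hQx, t, hQt, ht⟩ := hQ
  have hchain : (P ++ Q).IsChain (ArcAdj A) := hPc.append hQc (by simp [hPy, hQx, hyx])
  refine ⟨?_, hchain, hchain.nodup_of_acyclic hd, ⟨s, ?_, hs⟩, ⟨t, ?_, ht⟩⟩
  · have hP₀ := List.length_pos_of_mem (List.mem_of_getLast? hPy)
    have hQ₀ := List.length_pos_of_mem (List.mem_of_mem_head? hQx)
    rw [List.length_append]
    omega
  · simp [List.head?_append, hPs]
  · simp [List.getLast?_append, hQt]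

theorem IsSourceSinkPath.isPathFromSource {l₁ l₂ : List V} {a : V}
    (hp : IsSourceSinkPath A (l₁ ++ a :: l₂)) : IsPathFromSource A (l₁ ++ [a]) a := by
  obtain ⟨-, hc, -, ⟨s, hs, hsrc⟩, -⟩ := hp
  refine ⟨hc.prefix ⟨l₂, by simp⟩, by simp, s, ?_, hsrc⟩
  simpa [List.head?_append] using hs

theorem IsSourceSinkPath.isPathToSink {l₁ l₂ : List V} {a : V}
    (hp : IsSourceSinkPath A (l₁ ++ a :: l₂)) : IsPathToSink A a (a :: l₂) := by
  obtain ⟨-, hc, -, -, ⟨t, ht, hsink⟩⟩ := hp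
  refine ⟨hc.suffix ⟨l₁, rfl⟩, rfl, t, ?_, hsink⟩
  simpa [List.getLast?_append] using ht

theorem IsPathToSink.eq {v : V} {Q Q' : List V} (hQ : IsPathToSink A v Q)
    (hQ' : IsPathToSink A v Q') (hfun : ∀ x ∈ Q, outDeg A x ≤ 1) : Q = Q' :=
  hQ.1.eq_of_functional hQ'.1 (hQ.2.1.trans hQ'.2.1.symm)
    (fun x hx _ _ => eq_of_outDeg_le_one (hfun x hx))
    (hQ.2.2.imp fun _ ⟨ht, hsink⟩ => ⟨ht, isSink_iff.mp hsink⟩)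
    (hQ'.2.2.imp fun _ ⟨ht, hsink⟩ => ⟨ht, isSink_iff.mp hsink⟩)

theorem IsPathFromSource.eq {v : V} {P P' : List V} (hP : IsPathFromSource A P v)
    (hP' : IsPathFromSource A P' v) (hfun : ∀ x ∈ P, inDeg A x ≤ 1) : P = P' := by
  refine List.reverse_injective (List.IsChain.eq_of_functional (R := flip (ArcAdj A))
    (List.isChain_reverse.mpr hP.1) (List.isChain_reverse.mpr hP'.1) ?_
    (fun x hx _ _ => eq_of_inDeg_le_one (hfun x (List.mem_reverse.mp hx))) ?_ ?_)
  · simp [List.head?_reverse, hP.2.1, hP'.2.1]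
  · simpa [List.getLast?_reverse] using hP.2.2.imp fun _ ⟨hs, hsrc⟩ => ⟨hs, isSource_iff.mp hsrc⟩
  · simpa [List.getLast?_reverse] using hP'.2.2.imp fun _ ⟨hs, hsrc⟩ => ⟨hs, isSource_iff.mp hsrc⟩

theorem isPrivate_of_split {p l₁ l₂ : List V} {a b : V} (hp : IsSourceSinkPath A p)
    (hsplit : p = l₁ ++ a :: b :: l₂) (hin : ∀ z ∈ l₁ ++ [a], inDeg A z ≤ 1)
    (hout : ∀ z ∈ b :: l₂, outDeg A z ≤ 1) : IsPrivate A (a, b) := by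
  refine ⟨p, ⟨hp, mem_arcsOf_iff.mpr ⟨l₁, l₂, hsplit⟩⟩, ?_⟩
  rintro q ⟨hq, hab⟩
  obtain ⟨m₁, m₂, rfl⟩ := mem_arcsOf_iff.mp hab
  subst hsplit
  have hpre : l₁ ++ [a] = m₁ ++ [a] :=
    hp.isPathFromSource.eq hq.isPathFromSource hin
  have hsuf : b :: l₂ = b :: m₂ := by
    rw [List.append_cons l₁] at hp
    rw [List.append_cons m₁] at hq
    exact hp.isPathToSink.eq hq.isPathToSink hout
  obtain rfl := List.append_cancel_right hpre
  obtain rfl := (List.cons.inj hsuf).2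
  rfl

def MergeReachesSplit (A : Finset (V × V)) : Prop :=
  ∃ u w, 2 ≤ inDeg A u ∧ 2 ≤ outDeg A w ∧ ReflTransGen (ArcAdj A) u w

theorem MergeReachesSplit.mono (h : C ⊆ A) : MergeReachesSplit C → MergeReachesSplit A :=
  fun ⟨u, w, hu, hw, huw⟩ =>
    ⟨u, w, hu.trans (Finset.card_le_card (Finset.filter_subset_filter _ h)),
      hw.trans (Finset.card_le_card (Finset.filter_subset_filter _ h)),
      ReflTransGen.mono (fun _ _ hxy => h hxy) _ _ huw⟩

theorem isFunnel_of_not_mergeReachesSplit (h : ¬MergeReachesSplit A) : IsFunnel A := by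
  intro p hp
  obtain ⟨x, y, l, rfl⟩ : ∃ x y l, p = x :: y :: l := match p, hp.1 with
    | x :: y :: l, _ => ⟨x, y, l, rfl⟩
  obtain ⟨-, hc, -, ⟨s, hs, hsrc⟩, ⟨t, ht, hsink⟩⟩ := id hp
  obtain rfl : x = s := by simpa using hs
  rw [List.getLast?_eq_some_getLast (List.cons_ne_nil _ _)] at ht
  obtain ⟨l₁, a, b, l₂, hsplit, hin, hout⟩ :=
    hc.exists_split (p := (inDeg A · ≤ 1)) (q := (outDeg A · ≤ 1))
      (fun u w hu huw => by by_contra hw; exact h ⟨u, w, by omega, by omega, huw⟩)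
      (by rw [hsrc]; omega) (by rw [Option.some_inj.mp ht, hsink]; omega)
  exact ⟨(a, b), mem_arcsOf_iff.mpr ⟨l₁, l₂, hsplit⟩, isPrivate_of_split hp hsplit hin hout⟩

theorem IsDAG.not_mergeReachesSplit_of_isFunnel [Finite V] (hd : IsDAG A) (hf : IsFunnel A) :
    ¬MergeReachesSplit A := by
  rintro ⟨u, w, hu, hw, huw⟩
  obtain ⟨y₁, y₂, hy, hy₁, hy₂⟩ := exists_ne_of_two_le_inDeg hu
  obtain ⟨x₁, x₂, hx, hx₁, hx₂⟩ := exists_ne_of_two_le_outDeg hw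
  obtain ⟨l, hl, hlw⟩ := List.exists_isChain_cons_of_relationReflTransGen huw
  obtain ⟨P₁, hP₁⟩ := hd.exists_isPathFromSource y₁
  obtain ⟨P₂, hP₂⟩ := hd.exists_isPathFromSource y₂
  obtain ⟨Q₁, hQ₁⟩ := hd.exists_isPathToSink x₁
  obtain ⟨Q₂, hQ₂⟩ := hd.exists_isPathToSink x₂
  have hpath {y x : V} {P Q : List V} (hP : IsPathFromSource A P y) (hyu : ArcAdj A y u)
      (hwx : ArcAdj A w x) (hQ : IsPathToSink A x Q) : IsSourceSinkPath A (P ++ u :: (l ++ Q)) :=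
    hd.isSourceSinkPath_append hP hyu <|
      hQ.append_left hl rfl (hlw ▸ List.getLast?_eq_some_getLast _) hwx
  -- A private arc of the path through `y₁` and `x₁` also lies on the path through `x₂` if it
  -- comes before `u`, and on the path through `y₂` otherwise.
  obtain ⟨e, he, hpriv⟩ := hf _ (hpath hP₁ hy₁ hx₁ hQ₁)
  rw [arcsOf_append_cons] at he
  rcases List.mem_append.mp he with he | he
  · have hQ : Q₁ = Q₂ := by
      simpa using hpriv.unique ⟨hpath hP₁ hy₁ hx₁ hQ₁, by rw [arcsOf_append_cons]; simp [he]⟩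
        ⟨hpath hP₁ hy₁ hx₂ hQ₂, by rw [arcsOf_append_cons]; simp [he]⟩
    exact hx (Option.some_inj.mp (hQ₁.2.1.symm.trans (hQ ▸ hQ₂.2.1)))
  · have hP : P₁ = P₂ := by
      simpa using hpriv.unique ⟨hpath hP₁ hy₁ hx₁ hQ₁, by rw [arcsOf_append_cons]; simp [he]⟩
        ⟨hpath hP₂ hy₂ hx₁ hQ₁, by rw [arcsOf_append_cons]; simp [he]⟩
    exact hy (Option.some_inj.mp (hP₁.2.1.symm.trans (hP ▸ hP₂.2.1)))

theorem IsDAG.isFunnel_iff [Finite V] (hd : IsDAG A) : IsFunnel A ↔ ¬MergeReachesSplit A :=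
  ⟨hd.not_mergeReachesSplit_of_isFunnel, isFunnel_of_not_mergeReachesSplit⟩

theorem IsFunnel.subset [Finite V] (hf : IsFunnel A) (hd : IsDAG A) (h : C ⊆ A) : IsFunnel C :=
  isFunnel_of_not_mergeReachesSplit fun hC => hd.isFunnel_iff.mp hf (hC.mono h)

theorem isFunnel_empty : IsFunnel (∅ : Finset (V × V)) :=
  isFunnel_of_not_mergeReachesSplit <| by rintro ⟨_, _, hu, -⟩; simp [inDeg] at hu

theorem funnelDist_le_card {B : Finset (V × V)} (hB : B ⊆ A) (hf : IsFunnel (A \ B)) :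
    funnelDist A ≤ B.card :=
  Nat.sInf_le ⟨B, hB, rfl, hf⟩

theorem exists_card_eq_funnelDist (A : Finset (V × V)) :
    ∃ B ⊆ A, B.card = funnelDist A ∧ IsFunnel (A \ B) :=
  Nat.sInf_mem (s := {k | ∃ B ⊆ A, B.card = k ∧ IsFunnel (A \ B)})
    ⟨A.card, A, subset_rfl, rfl, by simpa using isFunnel_empty⟩

theorem funnelDist_le_card_inter [Finite V] {B H : Finset (V × V)} (hd : IsDAG A) (hH : H ⊆ A)
    (hf : IsFunnel (A \ B)) : funnelDist H ≤ (B ∩ H).card :=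
  funnelDist_le_card Finset.inter_subset_right <| hf.subset (hd.subset Finset.sdiff_subset) <| by
    intro e he
    simp only [Finset.mem_sdiff, Finset.mem_inter, not_and] at he ⊢
    exact ⟨hH he.1, fun hB => he.2 hB he.1⟩

end Digraph

/-- If `H 1, …, H k` are subgraphs of a DAG `D` with pairwise
disjoint arc sets, then the sum of their arc-deletion distances to a funnel is
at most the arc-deletion distance to a funnel of `D`. -/
theorem sum_funnelDist_le (A : Finset (V × V)) (hdag : IsDAG A) (k : ℕ)
    (H : Fin k → Finset (V × V)) (hsub : ∀ i, H i ⊆ A)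
    (hdisj : ∀ i j, i ≠ j → Disjoint (H i) (H j)) :
    ∑ i, funnelDist (H i) ≤ funnelDist A := by
  obtain ⟨B, -, hB, hfB⟩ := exists_card_eq_funnelDist A
  calc ∑ i, funnelDist (H i)
      ≤ ∑ i, (B ∩ H i).card :=
        Finset.sum_le_sum fun i _ => funnelDist_le_card_inter hdag (hsub i) hfB
    _ = (Finset.univ.biUnion fun i => B ∩ H i).card :=
      (Finset.card_biUnion fun i _ j _ hij =>
        (hdisj i j hij).mono Finset.inter_subset_right Finset.inter_subset_right).symm
    _ ≤ B.card :=
      Finset.card_le_card (Finset.biUnion_subset.mpr fun _ _ => Finset.inter_subset_left)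
    _ = funnelDist A := hB
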